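/- arXiv:0904.2781 — 9 statements merged into one kernel-verified Lean document; each statement's English description precedes it below -/
import Mathlib

section
/- For all y₁ with 0 < y₁ < √2, one has arctan(√2/4) + 2·arctan(y₁/2) > arctan((√2 + y₁)/4). -/
open Real

theorem second_reflection_angle_ineq (y₁ : ℝ) (h0 : 0 < y₁) (h2 : y₁ < Real.sqrt 2) :
    Real.arctan (Real.sqrt 2 / 4) + 2 * Real.arctan (y₁ / 2)
      > Real.arctan ((Real.sqrt 2 + y₁) / 4) := by
  have hs : (0:ℝ) < Real.sqrt 2 := Real.sqrt_pos.mpr (by norm_num)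
  have hs2 : Real.sqrt 2 < 2 := by
    nlinarith [Real.sq_sqrt (by norm_num : (2:ℝ) ≥ 0)]
  have hprod : (Real.sqrt 2 / 4) * (y₁ / 4) < 1 := by nlinarith
  have hden : 0 < 1 - (Real.sqrt 2 / 4) * (y₁ / 4) := by linarith
  have hle : 1 - (Real.sqrt 2 / 4) * (y₁ / 4) ≤ 1 := by nlinarith
  have key : Real.arctan ((Real.sqrt 2 + y₁) / 4)
      ≤ Real.arctan (Real.sqrt 2 / 4) + Real.arctan (y₁ / 4) := by
    rw [Real.arctan_add hprod]
    apply Real.arctan_strictMono.le_iff_le.mpr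
    rw [div_le_div_iff₀ (by norm_num) hden]
    nlinarith
  have h1 : Real.arctan (y₁ / 4) < Real.arctan (y₁ / 2) :=
    Real.arctan_strictMono (by linarith)
  have h2' : (0:ℝ) < Real.arctan (y₁ / 2) := by rw [show (0:ℝ) = Real.arctan 0 from Real.arctan_zero.symm]; exact Real.arctan_strictMono (by linarith)
  linarith
end

section
/- Fix y₃ with 0 < y₃ < √2. For m > 0, define y₂(m) = -2m + √(4m² + 4m·y₃ - y₃² + 4). Then the radicand 4m² + 4m·y₃ - y₃² + 4 is positive, and y₂ is strictly decreasing in m, i.e. dy₂/dm < 0 for all m > 0. -/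
open Real

/-! With `a = 2m + y₃` and `c = 4 - 2y₃²`, the radicand is `a² + c`, so
`y₂(m) = (√(a² + c) - a) + y₃`. The hypotheses give `y₃² < 2`, i.e. `c > 0`, and then
`a ↦ √(a² + c) - a` has derivative `a / √(a² + c) - 1 < 0` because `|a| < √(a² + c)`. -/

section SqrtSqAddSub

variable {c : ℝ}

theorem abs_lt_sqrt_sq_add (hc : 0 < c) (a : ℝ) : |a| < √(a ^ 2 + c) :=
  (lt_sqrt (abs_nonneg a)).2 (by rw [sq_abs]; linarith)

theorem hasDerivAt_sqrt_sq_add_sub (hc : 0 < c) (a : ℝ) :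
    HasDerivAt (fun a => √(a ^ 2 + c) - a) (a / √(a ^ 2 + c) - 1) a := by
  have hrad : HasDerivAt (fun a => a ^ 2 + c) (2 * a) a := by
    simpa using (hasDerivAt_pow 2 a).add_const c
  have h := (hrad.sqrt (by positivity)).sub (hasDerivAt_id' a)
  rwa [mul_div_mul_left _ _ two_ne_zero] at h

theorem sqrt_sq_add_sub_deriv_neg (hc : 0 < c) (a : ℝ) : a / √(a ^ 2 + c) - 1 < 0 := by
  have hpos : 0 < √(a ^ 2 + c) := sqrt_pos.2 (by positivity)
  rw [sub_neg, div_lt_one hpos]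
  exact (le_abs_self a).trans_lt (abs_lt_sqrt_sq_add hc a)

theorem strictAnti_sqrt_sq_add_sub (hc : 0 < c) : StrictAnti fun a => √(a ^ 2 + c) - a :=
  strictAnti_of_deriv_neg fun a => by
    rw [(hasDerivAt_sqrt_sq_add_sub hc a).deriv]
    exact sqrt_sq_add_sub_deriv_neg hc a

end SqrtSqAddSub

theorem y2_decreasing_in_slope (y₃ : ℝ) (h0 : 0 < y₃) (h2 : y₃ < Real.sqrt 2) :
    (∀ m : ℝ, 0 < m → 0 < 4*m^2 + 4*m*y₃ - y₃^2 + 4) ∧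
    (∀ m : ℝ, 0 < m →
      deriv (fun m : ℝ => -2*m + Real.sqrt (4*m^2 + 4*m*y₃ - y₃^2 + 4)) m < 0) ∧
    StrictAntiOn (fun m : ℝ => -2*m + Real.sqrt (4*m^2 + 4*m*y₃ - y₃^2 + 4))
      (Set.Ioi 0) := by
  have hc : 0 < 4 - 2 * y₃ ^ 2 := by
    have := (lt_sqrt h0.le).1 h2
    linarith
  have hrad : ∀ m : ℝ, 4*m^2 + 4*m*y₃ - y₃^2 + 4 = (2*m + y₃) ^ 2 + (4 - 2 * y₃ ^ 2) :=
    fun m => by ring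
  have hy₂ : (fun m : ℝ => -2*m + Real.sqrt (4*m^2 + 4*m*y₃ - y₃^2 + 4)) =
      fun m => (fun a => √(a ^ 2 + (4 - 2 * y₃ ^ 2)) - a) (2*m + y₃) + y₃ := by
    funext m
    rw [hrad]
    ring
  refine ⟨fun m _ => by rw [hrad]; positivity, fun m _ => ?_, ?_⟩
  · have haffine : HasDerivAt (fun m : ℝ => 2*m + y₃) 2 m := by
      simpa using ((hasDerivAt_id m).const_mul 2).add_const y₃
    rw [hy₂]
    exact (((hasDerivAt_sqrt_sq_add_sub hc _).comp m haffine).add_const y₃).deriv.trans_lt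
      (mul_neg_of_neg_of_pos (sqrt_sq_add_sub_deriv_neg hc _) two_pos)
  · rw [hy₂]
    refine (StrictAnti.add_const ?_ y₃).strictAntiOn _
    exact (strictAnti_sqrt_sq_add_sub hc).comp_strictMono fun _ _ h => by linarith
end

section
/- Define f(y) = -(3/2)y - (1/8)y³ + (1/8)√(272y² + 40y⁴ + y⁶ + 256) for 0 < y < √2. Then f''(y) > 0 on (0, √2). -/
/-!
Writing `g` for the radicand, `f'' = -(3/4) y + (2 g g'' - g'²) / (32 g^{3/2})`, and
`2 g g'' - g'² = P(y)` is an even polynomial with positive coefficients. So `f'' > 0` amounts to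
`24 y g^{3/2} < P`, which is trivial for `y ≤ 0`. For `y > 0` square both sides:
`P² - 576 y² g³ = Q(y²) + 24576 y¹⁴ (12 - y²)` with `Q` of positive coefficients, so the
inequality holds as long as `y² ≤ 12`.
-/

open Real

theorem hasDerivAt_deriv_sqrt {g g' : ℝ → ℝ} {g'' x : ℝ} (hg : ∀ z, HasDerivAt g (g' z) z)
    (hpos : ∀ z, 0 < g z) (hg' : HasDerivAt g' g'' x) :
    HasDerivAt (deriv fun z => √(g z)) ((2 * g x * g'' - g' x ^ 2) / (4 * g x * √(g x))) x := by
  have hd : deriv (fun z => √(g z)) = fun z => g' z / (2 * √(g z)) :=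
    funext fun z => ((hg z).sqrt (hpos z).ne').deriv
  have hgx : g x ≠ 0 := (hpos x).ne'
  have hs : 0 < √(g x) := sqrt_pos.mpr (hpos x)
  rw [hd]
  refine (hg'.div (((hg x).sqrt hgx).const_mul 2) (by positivity)).congr_deriv ?_
  field_simp
  rw [sq_sqrt (hpos x).le]
  field_simp
  ring

namespace DoubleParabola

def radicand (y : ℝ) : ℝ := 272*y^2 + 40*y^4 + y^6 + 256

noncomputable def ordinateBound (y : ℝ) : ℝ := -(3/2)*y - (1/8)*y^3 + (1/8)*√(radicand y)

theorem radicand_pos (y : ℝ) : 0 < radicand y := by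
  unfold radicand; positivity

theorem hasDerivAt_radicand (y : ℝ) :
    HasDerivAt radicand (544*y + 160*y^3 + 6*y^5) y := by
  refine ((((hasDerivAt_pow 2 y).const_mul 272).add ((hasDerivAt_pow 4 y).const_mul 40)).add
    (hasDerivAt_pow 6 y) |>.add_const 256).congr_deriv ?_
  norm_num; ring

theorem hasDerivAt_radicand_deriv (y : ℝ) :
    HasDerivAt (fun y : ℝ => 544*y + 160*y^3 + 6*y^5) (544 + 480*y^2 + 30*y^4) y := by
  refine (((hasDerivAt_id' y).const_mul 544).add ((hasDerivAt_pow 3 y).const_mul 160)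
    |>.add ((hasDerivAt_pow 5 y).const_mul 6)).congr_deriv ?_
  norm_num; ring

theorem two_mul_radicand_mul_sub_sq (y : ℝ) :
    2 * radicand y * (544 + 480*y^2 + 30*y^4) - (544*y + 160*y^3 + 6*y^5)^2
      = 24*y^10 + 1440*y^8 + 23680*y^6 + 145920*y^4 + 245760*y^2 + 278528 := by
  unfold radicand; ring

theorem sq_mul_radicand_pow_three_lt {y : ℝ} (hy : y^2 ≤ 12) :
    576 * y^2 * radicand y ^ 3
      < (24*y^10 + 1440*y^8 + 23680*y^6 + 145920*y^4 + 245760*y^2 + 278528)^2 := by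
  have hlow : 0 < 77577846784 + 127238406144*y^2 + 110880620544*y^4 + 47655682048*y^6
      + 12403605504*y^8 + 1569718272*y^10 + 77529088*y^12 := by positivity
  have htop : 0 ≤ 24576 * y^14 * (12 - y^2) := by
    have := sub_nonneg.mpr hy; positivity
  unfold radicand
  linear_combination hlow + htop

theorem mul_radicand_mul_sqrt_lt {y : ℝ} (hy : y ≤ √12) :
    24 * y * radicand y * √(radicand y)
      < 24*y^10 + 1440*y^8 + 23680*y^6 + 145920*y^4 + 245760*y^2 + 278528 := by
  have hP : 0 < 24*y^10 + 1440*y^8 + 23680*y^6 + 145920*y^4 + 245760*y^2 + 278528 := by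
    positivity
  have hr := radicand_pos y
  rcases le_or_gt y 0 with hneg | hpos
  · have : 24 * y * radicand y * √(radicand y) ≤ 0 :=
      mul_nonpos_of_nonpos_of_nonneg (mul_nonpos_of_nonpos_of_nonneg (by linarith) hr.le)
        (sqrt_nonneg _)
    linarith
  · have hy2 : y^2 ≤ 12 := (le_sqrt hpos.le (by norm_num)).mp hy
    refine lt_of_pow_lt_pow_left₀ 2 hP.le ?_
    calc (24 * y * radicand y * √(radicand y))^2 = 576 * y^2 * radicand y ^ 3 := by
          rw [mul_pow, sq_sqrt hr.le]; ring
      _ < _ := sq_mul_radicand_pow_three_lt hy2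

theorem hasDerivAt_deriv_ordinateBound (y : ℝ) :
    HasDerivAt (deriv ordinateBound)
      (-(3/4)*y + (1/8) * ((24*y^10 + 1440*y^8 + 23680*y^6 + 145920*y^4 + 245760*y^2 + 278528)
        / (4 * radicand y * √(radicand y)))) y := by
  have hsqrt := hasDerivAt_deriv_sqrt hasDerivAt_radicand radicand_pos (hasDerivAt_radicand_deriv y)
  have hd : deriv ordinateBound
      = fun z => -(3/2) - (3/8)*z^2 + (1/8) * deriv (fun w => √(radicand w)) z := by
    funext z
    refine ((((hasDerivAt_id' z).const_mul (-(3/2))).sub ((hasDerivAt_pow 3 z).const_mul (1/8))).add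
      ((((hasDerivAt_radicand z).sqrt (radicand_pos z).ne').const_mul (1/8)))).deriv.trans ?_
    rw [((hasDerivAt_radicand z).sqrt (radicand_pos z).ne').deriv]
    norm_num; ring
  rw [hd, ← two_mul_radicand_mul_sub_sq]
  refine (((hasDerivAt_const y _).sub ((hasDerivAt_pow 2 y).const_mul (3/8))).add
    (hsqrt.const_mul (1/8))).congr_deriv ?_
  norm_num; ring

theorem deriv_deriv_ordinateBound_pos {y : ℝ} (hy : y ≤ √12) :
    0 < deriv (deriv ordinateBound) y := by
  have hr := radicand_pos y
  have hs : 0 < √(radicand y) := sqrt_pos.mpr hr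
  rw [(hasDerivAt_deriv_ordinateBound y).deriv]
  have key := sub_pos.mpr (mul_radicand_mul_sqrt_lt hy)
  calc (0 : ℝ) < _ / (32 * radicand y * √(radicand y)) := div_pos key (by positivity)
    _ = _ := by field_simp; ring

end DoubleParabola

open DoubleParabola in
theorem f_second_deriv_pos_general (y : ℝ) (h2 : y < Real.sqrt 2) :
    0 < deriv (deriv (fun y : ℝ =>
      -(3/2)*y - (1/8)*y^3 + (1/8)*Real.sqrt (272*y^2 + 40*y^4 + y^6 + 256))) y :=
  deriv_deriv_ordinateBound_pos (h2.le.trans (sqrt_le_sqrt (by norm_num)))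

theorem f_second_deriv_pos (y : ℝ) (h0 : 0 < y) (h2 : y < Real.sqrt 2) :
    0 < deriv (deriv (fun y : ℝ =>
      -(3/2)*y - (1/8)*y^3 + (1/8)*Real.sqrt (272*y^2 + 40*y^4 + y^6 + 256))) y :=
  f_second_deriv_pos_general y h2
end

section
/- The polynomial equation 2304 - 1024y² - 992y⁴ - 160y⁶ - 3y⁸ = 0 has exactly one positive real root, namely ỹ = (2/3)√(-51 + 6√79), and numerically ỹ ≈ 1.017. -/
open Real

/-! With `t = y²` the octic factors as `-(3t² + 136t - 144)(t + 4)²`. The quadratic factor has the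
single positive root `t = (8√79 - 68)/3`, which is the square of `(2/3)√(-51 + 6√79)`. -/

lemma octic_eq_neg_mul (y : ℝ) :
    2304 - 1024*y^2 - 992*y^4 - 160*y^6 - 3*y^8 = -((3*y^4 + 136*y^2 - 144) * (y^2 + 4)^2) := by
  ring

lemma octic_eq_zero_iff (y : ℝ) :
    2304 - 1024*y^2 - 992*y^4 - 160*y^6 - 3*y^8 = 0 ↔ 3*y^4 + 136*y^2 - 144 = 0 := by
  rw [octic_eq_neg_mul, neg_eq_zero, mul_eq_zero, or_iff_left (by positivity)]

lemma eq_of_quartic_eq {a b : ℝ} (ha : 0 ≤ a) (hb : 0 ≤ b)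
    (h : 3*a^4 + 136*a^2 = 3*b^4 + 136*b^2) : a = b := by
  have hfac : (a^2 - b^2) * (3*(a^2 + b^2) + 136) = 0 := by linear_combination h
  have hsq : a^2 = b^2 := by
    rcases mul_eq_zero.mp hfac with h | h
    · linarith
    · nlinarith [sq_nonneg a, sq_nonneg b]
  exact (sq_eq_sq₀ ha hb).mp hsq

noncomputable def yTilde : ℝ := (2/3) * √(-51 + 6 * √79)

lemma yTilde_pos : 0 < yTilde := by
  have h : (8.5 : ℝ) < √79 := (lt_sqrt (by norm_num)).mpr (by norm_num)
  unfold yTilde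
  have : 0 < √(-51 + 6 * √79) := sqrt_pos.mpr (by linarith)
  positivity

lemma yTilde_sq : yTilde^2 = (8 * √79 - 68) / 3 := by
  have h : (8.5 : ℝ) < √79 := (lt_sqrt (by norm_num)).mpr (by norm_num)
  rw [yTilde, mul_pow, sq_sqrt (by linarith)]
  ring

lemma yTilde_isRoot : 3*yTilde^4 + 136*yTilde^2 - 144 = 0 := by
  have hs : √79 ^ 2 = 79 := sq_sqrt (by norm_num)
  linear_combination (3*yTilde^2 + 8*√79 + 68) * yTilde_sq + (64/3) * hs

lemma yTilde_approx : |yTilde - 1.017| < 0.001 := by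
  have hs_lo : (8.888 : ℝ) < √79 := (lt_sqrt (by norm_num)).mpr (by norm_num)
  have hs_hi : √79 < 8.8884 := (sqrt_lt' (by norm_num)).mpr (by norm_num)
  have hsq := yTilde_sq
  have hpos := yTilde_pos
  rw [abs_sub_lt_iff]
  constructor <;> nlinarith

theorem unique_positive_root :
    (∀ y : ℝ, 0 < y →
      (2304 - 1024*y^2 - 992*y^4 - 160*y^6 - 3*y^8 = 0 ↔
        y = (2/3) * Real.sqrt (-51 + 6 * Real.sqrt 79))) ∧
    |(2/3) * Real.sqrt (-51 + 6 * Real.sqrt 79) - 1.017| < 0.001 := by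
  refine ⟨fun y hy => ?_, yTilde_approx⟩
  change _ ↔ y = yTilde
  rw [octic_eq_zero_iff]
  constructor
  · intro hroot
    exact eq_of_quartic_eq hy.le yTilde_pos.le (by linarith [yTilde_isRoot])
  · rintro rfl
    exact yTilde_isRoot
end

section
/- Let f(y) = -(3/2)y - (1/8)y³ + (1/8)√(272y² + 40y⁴ + y⁶ + 256) on (0, √2). Then for all y in (0, √2), f(y) ≥ f(ỹ) = (8/9)√(-51 + 6√79), where ỹ = (2/3)√(-51 + 6√79); numerically this minimum value is approximately 1.356. -/
/-!
The minimizer `c = ỹ` is the positive root of `3c⁴ + 136c² = 144` (the paper's octic is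
`-(3c⁴ + 136c² - 144)(c² + 4)²`), and modulo this relation the radicand splits as
`272y² + 40y⁴ + y⁶ + 256 = (32c/3 + 12y + y³)² + 16(y - c)²((y + c/3)² + 8 + 2c²/9)`.
So its square root is at least `32c/3 + 12y + y³` for every real `y`, which says `f(y) ≥ 4c/3`,
with equality at `y = c`; no convexity argument is needed.
-/

open Real

noncomputable section

def secondReflectionBound (y : ℝ) : ℝ :=
  -(3/2)*y - (1/8)*y^3 + (1/8)*√(272*y^2 + 40*y^4 + y^6 + 256)

def secondReflectionMinimizer : ℝ := (2/3) * √(-51 + 6 * √79)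

end

section Root

variable {c : ℝ} (hc : 3 * c^4 + 136 * c^2 = 144)
include hc

theorem radicand_eq_sq_add_of_root (y : ℝ) :
    272*y^2 + 40*y^4 + y^6 + 256
      = (32*c/3 + 12*y + y^3)^2 + 16 * (y - c)^2 * ((y + c/3)^2 + 8 + 2*c^2/9) := by
  linear_combination (-16/9 : ℝ) * hc

theorem le_secondReflectionBound_of_root (y : ℝ) : 4/3 * c ≤ secondReflectionBound y := by
  have hsq : (32*c/3 + 12*y + y^3)^2 ≤ 272*y^2 + 40*y^4 + y^6 + 256 := by
    rw [radicand_eq_sq_add_of_root hc y]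
    have : 0 ≤ (y - c)^2 * ((y + c/3)^2 + 8 + 2*c^2/9) := by positivity
    linarith
  have hroot : 32*c/3 + 12*y + y^3 ≤ √(272*y^2 + 40*y^4 + y^6 + 256) :=
    Real.le_sqrt_of_sq_le hsq
  unfold secondReflectionBound
  linarith

theorem secondReflectionBound_root (hc0 : 0 ≤ c) : secondReflectionBound c = 4/3 * c := by
  have hsq : 272*c^2 + 40*c^4 + c^6 + 256 = (68*c/3 + c^3)^2 := by
    rw [radicand_eq_sq_add_of_root hc c]; ring
  unfold secondReflectionBound
  rw [hsq, Real.sqrt_sq (by positivity)]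
  ring

end Root

theorem sqrt_79_bounds : 8.8881 < √79 ∧ √79 < 8.8883 := by
  have h0 : 0 ≤ √79 := Real.sqrt_nonneg 79
  have h2 : √79 ^ 2 = 79 := Real.sq_sqrt (by norm_num)
  constructor <;> nlinarith

theorem secondReflectionMinimizer_sq :
    secondReflectionMinimizer ^ 2 = 4/9 * (-51 + 6 * √79) := by
  have hpos : 0 ≤ -51 + 6 * √79 := by linarith [sqrt_79_bounds.1]
  rw [secondReflectionMinimizer, mul_pow, Real.sq_sqrt hpos]
  ring

theorem secondReflectionMinimizer_nonneg : 0 ≤ secondReflectionMinimizer := by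
  unfold secondReflectionMinimizer; positivity

theorem secondReflectionMinimizer_isRoot :
    3 * secondReflectionMinimizer^4 + 136 * secondReflectionMinimizer^2 = 144 := by
  have h2 : √79 ^ 2 = 79 := Real.sq_sqrt (by norm_num)
  have hm := secondReflectionMinimizer_sq
  linear_combination (3 * secondReflectionMinimizer^2 + 4/3 * (-51 + 6 * √79) + 136) * hm
    + (64/3 : ℝ) * h2

theorem abs_secondReflectionMinimizer_sub_lt :
    |4/3 * secondReflectionMinimizer - 1.356| < 0.001 := by
  have hm := secondReflectionMinimizer_sq
  have hm0 := secondReflectionMinimizer_nonneg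
  obtain ⟨hl, hu⟩ := sqrt_79_bounds
  rw [abs_lt]
  constructor <;> nlinarith

theorem f_global_min :
    (∀ y ∈ Set.Ioo (0:ℝ) (Real.sqrt 2),
      (8/9) * Real.sqrt (-51 + 6 * Real.sqrt 79) ≤
        -(3/2)*y - (1/8)*y^3 + (1/8)*Real.sqrt (272*y^2 + 40*y^4 + y^6 + 256)) ∧
    (-(3/2)*((2/3) * Real.sqrt (-51 + 6 * Real.sqrt 79))
        - (1/8)*((2/3) * Real.sqrt (-51 + 6 * Real.sqrt 79))^3
        + (1/8)*Real.sqrt (272*((2/3) * Real.sqrt (-51 + 6 * Real.sqrt 79))^2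
            + 40*((2/3) * Real.sqrt (-51 + 6 * Real.sqrt 79))^4
            + ((2/3) * Real.sqrt (-51 + 6 * Real.sqrt 79))^6 + 256)
      = (8/9) * Real.sqrt (-51 + 6 * Real.sqrt 79)) ∧
    |(8/9) * Real.sqrt (-51 + 6 * Real.sqrt 79) - 1.356| < 0.001 := by
  have hmin : (8/9) * √(-51 + 6 * √79) = 4/3 * secondReflectionMinimizer := by
    rw [secondReflectionMinimizer]; ring
  have hroot := secondReflectionMinimizer_isRoot
  rw [hmin]
  exact ⟨fun y _ => le_secondReflectionBound_of_root hroot y,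
    secondReflectionBound_root hroot secondReflectionMinimizer_nonneg,
    abs_secondReflectionMinimizer_sub_lt⟩
end

section
/- For y₂, y₃ ∈ (0, √2): arctan(y₃(12 + y₃²)/16) < arctan(7√2/8) < π/2 - arctan(√2/2) < π/2 - arctan(y₂/2). -/
/-! The cubic `y * (12 + y ^ 2)` is strictly increasing on all of `ℝ` and equals `14 * √2` at
`y = √2`, and `π / 2 - arctan (√2 / 2) = arctan √2` with `7 * √2 / 8 < √2`; everything else is
the strict monotonicity of `arctan`. -/

open Real

lemma strictMono_mul_twelve_add_sq : StrictMono fun y : ℝ => y * (12 + y ^ 2) := by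
  intro a b hab
  -- `b (12 + b²) - a (12 + a²) = (b - a) (a² + a b + b² + 12)`
  have hfactor : 0 < a ^ 2 + a * b + b ^ 2 + 12 := by nlinarith [sq_nonneg (a + b)]
  nlinarith [mul_pos (sub_pos.2 hab) hfactor]

lemma pi_div_two_sub_arctan_sqrt_two_div_two : π / 2 - arctan (√2 / 2) = arctan √2 := by
  rw [← arctan_inv_of_pos (by positivity), inv_div, div_sqrt]

theorem angle_chain (y₂ y₃ : ℝ) (h₂ : y₂ ∈ Set.Ioo (0:ℝ) (Real.sqrt 2))
    (h₃ : y₃ ∈ Set.Ioo (0:ℝ) (Real.sqrt 2)) :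
    Real.arctan (y₃*(12 + y₃^2)/16) < Real.arctan (7*Real.sqrt 2/8) ∧
    Real.arctan (7*Real.sqrt 2/8) < π/2 - Real.arctan (Real.sqrt 2/2) ∧
    π/2 - Real.arctan (Real.sqrt 2/2) < π/2 - Real.arctan (y₂/2) := by
  refine ⟨arctan_strictMono ?_, ?_, ?_⟩
  · calc y₃ * (12 + y₃ ^ 2) / 16 < √2 * (12 + √2 ^ 2) / 16 :=
          div_lt_div_of_pos_right (strictMono_mul_twelve_add_sq h₃.2) (by norm_num)
      _ = 7 * √2 / 8 := by rw [sq_sqrt zero_le_two]; ring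
  · rw [pi_div_two_sub_arctan_sqrt_two_div_two]
    exact arctan_strictMono (by linarith [sqrt_pos.2 (zero_lt_two' ℝ)])
  · linarith [arctan_strictMono (div_lt_div_of_pos_right h₂.2 two_pos)]
end

section
/- With y₁* = (23/10)√2 - (1/90)√(444498 - 33120√2√(-51+6√79) - 38400√79), y₂* = (8/9)√(-51+6√79), and y₃* = (1/3)(54√2+6√546)^{1/3} - 8(54√2+6√546)^{-1/3}, one has π - 2·arctan(y₁*/2) - 2·arctan(y₂*/2) - arctan((√2 + y₃*)/4) < arctan(√2/4). -/
open Real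

private lemma sqrt_lb' {q x : ℝ} (hq : 0 ≤ q) (h : q ^ 2 ≤ x) : q ≤ Real.sqrt x := by
  calc q = Real.sqrt (q ^ 2) := (Real.sqrt_sq hq).symm
    _ ≤ Real.sqrt x := Real.sqrt_le_sqrt h

private lemma sqrt_ub' {x U : ℝ} (hU : 0 ≤ U) (h : x ≤ U ^ 2) : Real.sqrt x ≤ U := by
  calc Real.sqrt x ≤ Real.sqrt (U ^ 2) := Real.sqrt_le_sqrt h
    _ = U := Real.sqrt_sq hU

theorem fourth_reflection_entry_angle_bound :
    π - 2 * Real.arctan (((23/10)*Real.sqrt 2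
          - (1/90)*Real.sqrt (444498 - 33120*Real.sqrt 2*Real.sqrt (-51 + 6*Real.sqrt 79)
              - 38400*Real.sqrt 79)) / 2)
      - 2 * Real.arctan ((8/9)*Real.sqrt (-51 + 6*Real.sqrt 79) / 2)
      - Real.arctan ((Real.sqrt 2
          + ((1/3)*(54*Real.sqrt 2 + 6*Real.sqrt 546)^((1:ℝ)/3)
            - 8*(54*Real.sqrt 2 + 6*Real.sqrt 546)^(-(1:ℝ)/3))) / 4)
      < Real.arctan (Real.sqrt 2 / 4) := by
  -- lower bounds on the basic radicals
  have h2 : (14142135/10^7 : ℝ) ≤ Real.sqrt 2 := sqrt_lb' (by norm_num) (by norm_num)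
  have h79 : (8888194/10^6 : ℝ) ≤ Real.sqrt 79 := sqrt_lb' (by norm_num) (by norm_num)
  have hwnn : (0:ℝ) ≤ -51 + 6*Real.sqrt 79 := by nlinarith
  have hsw : (1526159/10^6 : ℝ) ≤ Real.sqrt (-51 + 6*Real.sqrt 79) :=
    sqrt_lb' (by norm_num) (by nlinarith)
  have h546 : (2336664/10^5 : ℝ) ≤ Real.sqrt 546 := sqrt_lb' (by norm_num) (by norm_num)
  -- upper bound on the big square root
  have hprod : (14142135/10^7 : ℝ) * (1526159/10^6) ≤
      Real.sqrt 2 * Real.sqrt (-51 + 6*Real.sqrt 79) :=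
    mul_le_mul h2 hsw (by norm_num) (Real.sqrt_nonneg _)
  have hX : Real.sqrt (444498 - 33120*Real.sqrt 2*Real.sqrt (-51 + 6*Real.sqrt 79)
      - 38400*Real.sqrt 79) ≤ 17807/100 := by
    apply sqrt_ub' (by norm_num)
    nlinarith [hprod, h79]
  -- bound for the first argument
  have ha : (637/1000 : ℝ) ≤ ((23/10)*Real.sqrt 2
      - (1/90)*Real.sqrt (444498 - 33120*Real.sqrt 2*Real.sqrt (-51 + 6*Real.sqrt 79)
          - 38400*Real.sqrt 79)) / 2 := by
    nlinarith [h2, hX]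
  -- bound for the second argument
  have hb : (678/1000 : ℝ) ≤ (8/9)*Real.sqrt (-51 + 6*Real.sqrt 79) / 2 := by
    nlinarith [hsw]
  -- cube-root bounds
  set B : ℝ := 54*Real.sqrt 2 + 6*Real.sqrt 546 with hBdef
  have hBnn : (0:ℝ) ≤ B := by positivity
  have hBlo : (60052/10^4 : ℝ) ^ (3:ℝ) ≤ B := by
    rw [show (3:ℝ) = ((3:ℕ):ℝ) by norm_num, Real.rpow_natCast]
    nlinarith [h2, h546]
  have hc1 : (60052/10^4 : ℝ) ≤ B ^ ((1:ℝ)/3) := by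
    calc (60052/10^4 : ℝ) = ((60052/10^4 : ℝ) ^ (3:ℝ)) ^ ((1:ℝ)/3) := by
          rw [← Real.rpow_mul (by norm_num : (0:ℝ) ≤ (60052/10^4 : ℝ))]
          norm_num
      _ ≤ B ^ ((1:ℝ)/3) := Real.rpow_le_rpow (by positivity) hBlo (by norm_num)
  have hcpos : (0:ℝ) < B ^ ((1:ℝ)/3) := lt_of_lt_of_le (by norm_num) hc1
  have hinv : B ^ (-(1:ℝ)/3) ≤ 10^4/60052 := by
    have h1 : B ^ (-(1:ℝ)/3) = (B ^ ((1:ℝ)/3))⁻¹ := by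
      rw [show (-(1:ℝ)/3) = -((1:ℝ)/3) by ring, Real.rpow_neg hBnn]
    rw [h1]
    have h2' : ((60052/10^4 : ℝ))⁻¹ = 10^4/60052 := by norm_num
    rw [← h2']
    exact inv_anti₀ (by norm_num) hc1
  -- bound for the third argument
  have hc : (5209/10000 : ℝ) ≤ (Real.sqrt 2
      + ((1/3)*B^((1:ℝ)/3) - 8*B^(-(1:ℝ)/3))) / 4 := by
    nlinarith [h2, hc1, hinv]
  -- bound for the fourth argument
  have hd : (3535/10000 : ℝ) ≤ Real.sqrt 2 / 4 := by nlinarith [h2]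
  -- monotonicity of arctan
  have ma := Real.arctan_strictMono.monotone ha
  have mb := Real.arctan_strictMono.monotone hb
  have mc := Real.arctan_strictMono.monotone hc
  have md := Real.arctan_strictMono.monotone hd
  -- the key rational-arctan inequality: π < 2·arctan qa + 2·arctan qb + arctan qc + arctan qd
  have hab : Real.arctan (637/1000) + Real.arctan (678/1000)
      = Real.arctan (657500/284057) := by
    rw [Real.arctan_add (by norm_num)]
    norm_num
  have hcd : Real.arctan (5209/10000) + Real.arctan (3535/10000)
      = Real.arctan (17488000/16317237) := by
    rw [Real.arctan_add (by norm_num)]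
    norm_num
  have he : Real.arctan (284057/657500 : ℝ) = π/2 - Real.arctan (657500/284057) := by
    have h := Real.arctan_inv_of_pos (show (0:ℝ) < 657500/284057 by norm_num)
    rwa [show ((657500/284057:ℝ))⁻¹ = (284057/657500 : ℝ) by norm_num] at h
  have h2g : 2 * Real.arctan (284057/657500 : ℝ)
      = Real.arctan (2*(284057/657500)/(1-(284057/657500)^2)) :=
    Real.two_mul_arctan (by norm_num) (by norm_num)
  have hfin : Real.arctan (2*(284057/657500)/(1-(284057/657500)^2) : ℝ)
      < Real.arctan (17488000/16317237 : ℝ) :=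
    Real.arctan_strictMono (by norm_num)
  linarith [ma, mb, mc, md, hab, hcd, he, h2g, hfin]
end

section
/- For a particle entering the Double Parabola cavity at (x, 0) with -1/2 < x < 1/2 and velocity making angle φ with the downward-pointing inward vertical, if φ > arctan(x/√2) then the first intersection of the ray with the cavity boundary lies on the left parabolic arc x = y²/4 - 1/2; in particular, if φ > φ₀ = arctan(√2/4) the first reflection is always on the left arc, for every x ∈ (-1/2, 1/2). -/
open Real

set_option maxHeartbeats 1000000 in
/-- A particle entering the Double Parabola cavity at `(x, 0)` with velocity
`(-sin φ, cos φ)` (angle `φ` measured from the inward vertical, positive `φ`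
tilting to the left) first hits the left parabolic arc provided
`φ > arctan (x/√2)`: there is a time `t > 0` at which the particle lies on the
left arc, and at no earlier positive time does it lie on either arc. -/
theorem first_reflection_on_left_arc (x φ : ℝ)
    (hx₁ : -(1/2) < x) (hx₂ : x < 1/2)
    (hφ₁ : Real.arctan (x / Real.sqrt 2) < φ) (hφ₂ : φ < π/2) :
    ∃ t : ℝ, 0 < t ∧
      (x - t * Real.sin φ = (t * Real.cos φ)^2/4 - 1/2 ∧
        0 ≤ t * Real.cos φ ∧ t * Real.cos φ ≤ Real.sqrt 2) ∧
      ∀ s : ℝ, 0 < s → s < t →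
        ¬ ((x - s * Real.sin φ = (s * Real.cos φ)^2/4 - 1/2 ∧
              0 ≤ s * Real.cos φ ∧ s * Real.cos φ ≤ Real.sqrt 2) ∨
           (x - s * Real.sin φ = -((s * Real.cos φ)^2/4) + 1/2 ∧
              0 ≤ s * Real.cos φ ∧ s * Real.cos φ ≤ Real.sqrt 2)) := by
  have hsq2 : (Real.sqrt 2) ^ 2 = 2 := Real.sq_sqrt (by norm_num)
  have hsq2pos : 0 < Real.sqrt 2 := Real.sqrt_pos.mpr (by norm_num)
  set c := Real.cos φ with hc
  set sφ := Real.sin φ with hs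
  have hφlo : -(π/2) < φ := lt_trans (Real.neg_pi_div_two_lt_arctan _) hφ₁
  have hcpos : 0 < c := Real.cos_pos_of_mem_Ioo ⟨hφlo, hφ₂⟩
  have htan : x / Real.sqrt 2 < sφ / c := by
    have h1 : Real.tan (Real.arctan (x / Real.sqrt 2)) < Real.tan φ :=
      Real.tan_lt_tan_of_lt_of_lt_pi_div_two (Real.neg_pi_div_two_lt_arctan _) hφ₂ hφ₁
    rwa [Real.tan_arctan, Real.tan_eq_sin_div_cos] at h1
  have hkey : x * c < Real.sqrt 2 * sφ := by
    rw [div_lt_div_iff₀ hsq2pos hcpos] at htan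
    linarith
  have hc2 : (0:ℝ) < c ^ 2 := by positivity
  have hxp : (0:ℝ) < x + 1/2 := by linarith
  obtain ⟨t, htpos, heqt⟩ : ∃ t : ℝ, 0 < t ∧
      x - t * sφ = (t * c) ^ 2 / 4 - 1 / 2 := by
    set D := Real.sqrt (sφ ^ 2 + c ^ 2 * (x + 1/2)) with hDdef
    have hDnn : 0 ≤ D := Real.sqrt_nonneg _
    have hD2 : D ^ 2 = sφ ^ 2 + c ^ 2 * (x + 1/2) := by
      rw [hDdef]
      exact Real.sq_sqrt (by nlinarith [Real.sin_sq_add_cos_sq φ])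
    have hDs : sφ < D := by nlinarith [mul_pos hc2 hxp]
    refine ⟨2 * (D - sφ) / c ^ 2, div_pos (by linarith) hc2, ?_⟩
    have hc2ne : c ^ 2 ≠ 0 := ne_of_gt hc2
    field_simp
    nlinarith [hD2]
  have huc_le : ∀ u : ℝ, 0 < u → x - u * sφ = (u * c) ^ 2 / 4 - 1 / 2 →
      u * c ≤ Real.sqrt 2 := by
    intro u hu heq
    by_contra h
    push_neg at h
    have hk : u * (x * c) < u * (Real.sqrt 2 * sφ) :=
      mul_lt_mul_of_pos_left hkey hu
    nlinarith [mul_pos (sub_pos.mpr h) hxp,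
      mul_pos hsq2pos (mul_pos (lt_trans hsq2pos h) (sub_pos.mpr h))]
  refine ⟨t, htpos, ⟨heqt, by positivity, huc_le t htpos heqt⟩, ?_⟩
  intro u hu hut hcon
  rcases hcon with ⟨h1, _, _⟩ | ⟨h1, huc0, huc2⟩
  · have e1 : c ^ 2 * t ^ 2 / 4 + sφ * t = x + 1/2 := by linear_combination -heqt
    have e2 : c ^ 2 * u ^ 2 / 4 + sφ * u = x + 1/2 := by linear_combination -h1
    have key : c ^ 2 * t * u * (t - u) / 4 = (x + 1/2) * (u - t) := by
      linear_combination u * e1 - t * e2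
    nlinarith [mul_pos (mul_pos (mul_pos hc2 htpos) hu) (sub_pos.mpr hut),
      mul_pos hxp (sub_pos.mpr hut)]
  · have hk : u * (x * c) < u * (Real.sqrt 2 * sφ) :=
      mul_lt_mul_of_pos_left hkey hu
    nlinarith [mul_nonneg (sub_nonneg.mpr huc2) (by linarith : (0:ℝ) ≤ 1/2 - x),
      mul_nonneg (Real.sqrt_nonneg 2) (mul_nonneg huc0 (sub_nonneg.mpr huc2))]
end

section
/- If every trajectory with 4 or more reflections has entry angle φ ∈ (-φ₀, φ₀), then by time-reversibility of billiard dynamics its exit angle also satisfies φ⁺ ∈ (-φ₀, φ₀); consequently |φ - φ⁺| < 2φ₀ for every trajectory with 4 or more reflections, where φ₀ = arctan(√2/4). -/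
open Real

/-- Time-reversibility corollary. Abstracting billiard trajectories in the
Double Parabola cavity as a type `T` with number-of-reflections, entry and exit
angle maps, and a reversal operation `rev` exchanging entry and exit and
preserving the number of reflections: if every trajectory with at least 4
reflections has entry angle in `(-φ₀, φ₀)` where `φ₀ = arctan (√2/4)`, then
every such trajectory also has exit angle in `(-φ₀, φ₀)`, and consequently
`|φ - φ⁺| < 2φ₀`. -/
theorem four_reflections_angle_gap
    (T : Type*) (numRefl : T → ℕ) (entry exit : T → ℝ) (rev : T → T)
    (hrev_entry : ∀ t, entry (rev t) = exit t)
    (hrev_refl : ∀ t, numRefl (rev t) = numRefl t)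
    (hmain : ∀ t, 4 ≤ numRefl t →
      entry t ∈ Set.Ioo (-Real.arctan (Real.sqrt 2 / 4)) (Real.arctan (Real.sqrt 2 / 4))) :
    ∀ t, 4 ≤ numRefl t →
      exit t ∈ Set.Ioo (-Real.arctan (Real.sqrt 2 / 4)) (Real.arctan (Real.sqrt 2 / 4)) ∧
      |entry t - exit t| < 2 * Real.arctan (Real.sqrt 2 / 4) := by
  intro t ht
  have h1 := hmain t ht
  have h2 := hmain (rev t) (by rw [hrev_refl]; exact ht)
  rw [hrev_entry] at h2
  refine ⟨h2, ?_⟩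
  obtain ⟨a1, b1⟩ := h1
  obtain ⟨a2, b2⟩ := h2
  rw [abs_lt]
  constructor <;> linarith
end
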